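/- arXiv:2603.05406 — 2 statements merged into one kernel-verified Lean document; each statement's English description precedes it below -/
import Mathlib

section
/- (Join soundness.) Let D1 = (V1, E1) and D2 = (V2, E2) be finite digraphs with X := V1 ∩ V2, such that no edge of E1 ∪ E2 has one endpoint in V1 ∖ X and the other in V2 ∖ X, and such that E1 and E2 contain exactly the same edges with both endpoints in X. Let π1 and π2 be feedback Morse orders on D1 and D2 that induce the same order on X, let M_I denote the set of backward edges with both endpoints in X (which is the same for π1 and π2), and suppose that (V(M(π1)) ∩ X) ∩ (V(M(π2)) ∩ X) ⊆ V(M_I). Then every total order π on V1 ∪ V2 whose restrictions to V1 and V2 are π1 and π2 is a feedback Morse order on the union digraph D = (V1 ∪ V2, E1 ∪ E2), and its set of backward edges is M(π1) ∪ M(π2). -/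
/-!
A finite digraph is encoded by a vertex set `V : Finset α` and an edge set
`E : Finset (α × α)` whose endpoints lie in `V`.  A total order `π` on `V` is
encoded by a function `π : α → ℕ` that is injective on `V`; a vertex `u`
precedes `v` when `π u < π v`.  An order restricts to another when it induces
the same comparisons on the corresponding subset.
-/

/-- The set of backward edges of `E` with respect to the order `π`. -/
def backwardEdges {α : Type*} (E : Finset (α × α)) (π : α → ℕ) : Finset (α × α) :=
  E.filter fun e => π e.2 < π e.1

/-- A set of directed edges is a matching if no two (distinct) edges share an endpoint. -/
def IsMatching {α : Type*} (M : Finset (α × α)) : Prop :=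
  ∀ e ∈ M, ∀ e' ∈ M, e ≠ e' →
    e.1 ≠ e'.1 ∧ e.1 ≠ e'.2 ∧ e.2 ≠ e'.1 ∧ e.2 ≠ e'.2

/-- `V(M)`: the set of endpoints of edges of `M` (the matched vertices). -/
def matchedVerts {α : Type*} [DecidableEq α] (M : Finset (α × α)) : Finset α :=
  M.biUnion fun e => {e.1, e.2}

/-- The edges of `M` with both endpoints in `X`. -/
def bothInX {α : Type*} [DecidableEq α] (X : Finset α) (M : Finset (α × α)) :
    Finset (α × α) :=
  M.filter fun e => e.1 ∈ X ∧ e.2 ∈ X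

/-- **Join soundness.** Let `D1 = (V1, E1)` and `D2 = (V2, E2)` be finite
digraphs with `X = V1 ∩ V2`, no edge joining `V1 \ X` to `V2 \ X`, and the same edges
with both endpoints in `X`.  Let `π1, π2` be feedback Morse orders on `D1, D2` inducing
the same order on `X`, let `M_I` be the set of backward edges with both endpoints in `X`
(the same for `π1` and `π2`), and suppose the matched bag vertices of the two sides
overlap only inside `V(M_I)`.  Then every total order `π` on `V1 ∪ V2` restricting to
`π1` on `V1` and to `π2` on `V2` is a feedback Morse order on the union digraph, with
backward-edge set `M(π1) ∪ M(π2)`. -/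
theorem stmt_13 {α : Type*} [DecidableEq α] (V1 V2 : Finset α)
    (E1 E2 : Finset (α × α))
    (hE1 : ∀ e ∈ E1, e.1 ∈ V1 ∧ e.2 ∈ V1) (hE2 : ∀ e ∈ E2, e.1 ∈ V2 ∧ e.2 ∈ V2)
    (hsep : ∀ e ∈ E1 ∪ E2,
      ¬(e.1 ∈ V1 \ (V1 ∩ V2) ∧ e.2 ∈ V2 \ (V1 ∩ V2)) ∧
      ¬(e.1 ∈ V2 \ (V1 ∩ V2) ∧ e.2 ∈ V1 \ (V1 ∩ V2)))
    (hEX : bothInX (V1 ∩ V2) E1 = bothInX (V1 ∩ V2) E2)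
    (π1 π2 : α → ℕ) (hinj1 : Set.InjOn π1 ↑V1) (hinj2 : Set.InjOn π2 ↑V2)
    (hfmo1 : IsMatching (backwardEdges E1 π1))
    (hfmo2 : IsMatching (backwardEdges E2 π2))
    (hagree : ∀ a ∈ V1 ∩ V2, ∀ b ∈ V1 ∩ V2, (π1 a < π1 b ↔ π2 a < π2 b))
    (hover : (matchedVerts (backwardEdges E1 π1) ∩ (V1 ∩ V2)) ∩
        (matchedVerts (backwardEdges E2 π2) ∩ (V1 ∩ V2)) ⊆
        matchedVerts (bothInX (V1 ∩ V2) (backwardEdges E1 π1)))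
    (π : α → ℕ) (hinj : Set.InjOn π ↑(V1 ∪ V2))
    (hres1 : ∀ a ∈ V1, ∀ b ∈ V1, (π a < π b ↔ π1 a < π1 b))
    (hres2 : ∀ a ∈ V2, ∀ b ∈ V2, (π a < π b ↔ π2 a < π2 b)) :
    bothInX (V1 ∩ V2) (backwardEdges E1 π1) =
        bothInX (V1 ∩ V2) (backwardEdges E2 π2) ∧
      IsMatching (backwardEdges (E1 ∪ E2) π) ∧
      backwardEdges (E1 ∪ E2) π = backwardEdges E1 π1 ∪ backwardEdges E2 π2 := by
  set X := V1 ∩ V2 with hX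
  have hEXmem : ∀ e : α × α, e.1 ∈ X → e.2 ∈ X → (e ∈ E1 ↔ e ∈ E2) := by
    intro e h1 h2
    constructor
    · intro h
      have : e ∈ bothInX X E1 := Finset.mem_filter.2 ⟨h, h1, h2⟩
      rw [hEX] at this
      exact (Finset.mem_filter.1 this).1
    · intro h
      have : e ∈ bothInX X E2 := Finset.mem_filter.2 ⟨h, h1, h2⟩
      rw [← hEX] at this
      exact (Finset.mem_filter.1 this).1
  have part1 : bothInX X (backwardEdges E1 π1) = bothInX X (backwardEdges E2 π2) := by
    ext e
    simp only [bothInX, backwardEdges, Finset.mem_filter]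
    constructor
    · rintro ⟨⟨hE, hb⟩, h1, h2⟩
      exact ⟨⟨(hEXmem e h1 h2).1 hE, (hagree _ h2 _ h1).1 hb⟩, h1, h2⟩
    · rintro ⟨⟨hE, hb⟩, h1, h2⟩
      exact ⟨⟨(hEXmem e h1 h2).2 hE, (hagree _ h2 _ h1).2 hb⟩, h1, h2⟩
  have part3 : backwardEdges (E1 ∪ E2) π = backwardEdges E1 π1 ∪ backwardEdges E2 π2 := by
    ext e
    simp only [backwardEdges, Finset.mem_filter, Finset.mem_union]
    constructor
    · rintro ⟨h | h, hb⟩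
      · exact Or.inl ⟨h, (hres1 _ (hE1 e h).2 _ (hE1 e h).1).1 hb⟩
      · exact Or.inr ⟨h, (hres2 _ (hE2 e h).2 _ (hE2 e h).1).1 hb⟩
    · rintro (⟨h, hb⟩ | ⟨h, hb⟩)
      · exact ⟨Or.inl h, (hres1 _ (hE1 e h).2 _ (hE1 e h).1).2 hb⟩
      · exact ⟨Or.inr h, (hres2 _ (hE2 e h).2 _ (hE2 e h).1).2 hb⟩
  have share : ∀ (M : Finset (α × α)), IsMatching M → ∀ e ∈ M, ∀ f ∈ M,
      ∀ v : α, (v = e.1 ∨ v = e.2) → (v = f.1 ∨ v = f.2) → e = f := by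
    intro M hM e he f hf v hv1 hv2
    by_contra hne
    obtain ⟨h1, h2, h3, h4⟩ := hM e he f hf hne
    rcases hv1 with rfl | rfl <;> rcases hv2 with h | h
    exacts [h1 h, h2 h, h3 h, h4 h]
  have key : ∀ e ∈ backwardEdges E1 π1, ∀ e' ∈ backwardEdges E2 π2,
      ∀ v : α, (v = e.1 ∨ v = e.2) → (v = e'.1 ∨ v = e'.2) → e = e' := by
    intro e he e' he' v hv hv'
    have heV := hE1 e (Finset.mem_filter.1 he).1
    have he'V := hE2 e' (Finset.mem_filter.1 he').1
    have hvV1 : v ∈ V1 := by rcases hv with rfl | rfl; exacts [heV.1, heV.2]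
    have hvV2 : v ∈ V2 := by rcases hv' with rfl | rfl; exacts [he'V.1, he'V.2]
    have hvX : v ∈ X := Finset.mem_inter.2 ⟨hvV1, hvV2⟩
    have hm1 : v ∈ matchedVerts (backwardEdges E1 π1) := by
      simp only [matchedVerts, Finset.mem_biUnion, Finset.mem_insert,
        Finset.mem_singleton]
      exact ⟨e, he, hv⟩
    have hm2 : v ∈ matchedVerts (backwardEdges E2 π2) := by
      simp only [matchedVerts, Finset.mem_biUnion, Finset.mem_insert,
        Finset.mem_singleton]
      exact ⟨e', he', hv'⟩
    have hv' := hover (Finset.mem_inter.2 ⟨Finset.mem_inter.2 ⟨hm1, hvX⟩,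
      Finset.mem_inter.2 ⟨hm2, hvX⟩⟩)
    simp only [matchedVerts, Finset.mem_biUnion, Finset.mem_insert,
      Finset.mem_singleton] at hv'
    obtain ⟨f, hf, hvf⟩ := hv'
    have hfM1 : f ∈ backwardEdges E1 π1 := (Finset.mem_filter.1 hf).1
    have hfM2 : f ∈ backwardEdges E2 π2 := by
      have : f ∈ bothInX X (backwardEdges E2 π2) := part1 ▸ hf
      exact (Finset.mem_filter.1 this).1
    have h1 : e = f := share _ hfmo1 e he f hfM1 v hv hvf
    have h2 : e' = f := share _ hfmo2 e' he' f hfM2 v ‹v = e'.1 ∨ v = e'.2› hvf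
    rw [h1, h2]
  have part2 : IsMatching (backwardEdges (E1 ∪ E2) π) := by
    rw [part3]
    intro e he e' he' hne
    rw [Finset.mem_union] at he he'
    rcases he with he | he <;> rcases he' with he' | he'
    · exact hfmo1 e he e' he' hne
    · exact ⟨fun h => hne (key e he e' he' e.1 (Or.inl rfl) (Or.inl h)),
        fun h => hne (key e he e' he' e.1 (Or.inl rfl) (Or.inr h)),
        fun h => hne (key e he e' he' e.2 (Or.inr rfl) (Or.inl h)),
        fun h => hne (key e he e' he' e.2 (Or.inr rfl) (Or.inr h))⟩
    · exact ⟨fun h => hne ((key e' he' e he e.1 (Or.inl h) (Or.inl rfl)).symm),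
        fun h => hne ((key e' he' e he e.1 (Or.inr h) (Or.inl rfl)).symm),
        fun h => hne ((key e' he' e he e.2 (Or.inl h) (Or.inr rfl)).symm),
        fun h => hne ((key e' he' e he e.2 (Or.inr h) (Or.inr rfl)).symm)⟩
    · exact hfmo2 e he e' he' hne
  exact ⟨part1, part2, part3⟩
end

section
/- (Join completeness.) Let D1 = (V1, E1) and D2 = (V2, E2) be finite digraphs with X := V1 ∩ V2, such that no edge of E1 ∪ E2 has one endpoint in V1 ∖ X and the other in V2 ∖ X, and such that E1 and E2 contain exactly the same edges with both endpoints in X. Let π be a feedback Morse order on the union digraph D = (V1 ∪ V2, E1 ∪ E2), let π1 and π2 be its restrictions to V1 and V2, and let M_I be the set of backward edges of π with both endpoints in X. Then the sets (V(M(π1)) ∩ X) ∖ V(M_I) and (V(M(π2)) ∩ X) ∖ V(M_I) are disjoint, and their union equals (V(M(π)) ∩ X) ∖ V(M_I). -/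
/-- **Join completeness.** Let `D1 = (V1, E1)` and `D2 = (V2, E2)` be
finite digraphs with `X = V1 ∩ V2`, no edge joining `V1 \ X` to `V2 \ X`, and the same
edges with both endpoints in `X`.  Let `π` be a feedback Morse order on the union
digraph, `π1, π2` its restrictions to `V1, V2`, and `M_I` the set of backward edges of
`π` with both endpoints in `X`.  Then `(V(M(π1)) ∩ X) \ V(M_I)` and
`(V(M(π2)) ∩ X) \ V(M_I)` are disjoint and their union is `(V(M(π)) ∩ X) \ V(M_I)`. -/
theorem stmt_14 {α : Type*} [DecidableEq α] (V1 V2 : Finset α)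
    (E1 E2 : Finset (α × α))
    (hE1 : ∀ e ∈ E1, e.1 ∈ V1 ∧ e.2 ∈ V1) (hE2 : ∀ e ∈ E2, e.1 ∈ V2 ∧ e.2 ∈ V2)
    (hsep : ∀ e ∈ E1 ∪ E2,
      ¬(e.1 ∈ V1 \ (V1 ∩ V2) ∧ e.2 ∈ V2 \ (V1 ∩ V2)) ∧
      ¬(e.1 ∈ V2 \ (V1 ∩ V2) ∧ e.2 ∈ V1 \ (V1 ∩ V2)))
    (hEX : bothInX (V1 ∩ V2) E1 = bothInX (V1 ∩ V2) E2)
    (π : α → ℕ) (hinj : Set.InjOn π ↑(V1 ∪ V2))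
    (hfmo : IsMatching (backwardEdges (E1 ∪ E2) π)) :
    Disjoint
        ((matchedVerts (backwardEdges E1 π) ∩ (V1 ∩ V2)) \
          matchedVerts (bothInX (V1 ∩ V2) (backwardEdges (E1 ∪ E2) π)))
        ((matchedVerts (backwardEdges E2 π) ∩ (V1 ∩ V2)) \
          matchedVerts (bothInX (V1 ∩ V2) (backwardEdges (E1 ∪ E2) π))) ∧
      ((matchedVerts (backwardEdges E1 π) ∩ (V1 ∩ V2)) \
          matchedVerts (bothInX (V1 ∩ V2) (backwardEdges (E1 ∪ E2) π))) ∪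
        ((matchedVerts (backwardEdges E2 π) ∩ (V1 ∩ V2)) \
          matchedVerts (bothInX (V1 ∩ V2) (backwardEdges (E1 ∪ E2) π))) =
        (matchedVerts (backwardEdges (E1 ∪ E2) π) ∩ (V1 ∩ V2)) \
          matchedVerts (bothInX (V1 ∩ V2) (backwardEdges (E1 ∪ E2) π)) := by

  classical
  have hmem : ∀ (M : Finset (α × α)) (v : α),
      v ∈ matchedVerts M ↔ ∃ e ∈ M, v = e.1 ∨ v = e.2 := by
    intro M v
    simp [matchedVerts]
  set X := V1 ∩ V2 with hX
  set M := backwardEdges (E1 ∪ E2) π with hM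
  set MI := bothInX X M with hMI
  -- key: an edge of backwardEdges Ei π is in M
  have hsub1 : backwardEdges E1 π ⊆ M := by
    intro e he
    rw [hM, backwardEdges, Finset.mem_filter]
    rw [backwardEdges, Finset.mem_filter] at he
    exact ⟨Finset.mem_union_left _ he.1, he.2⟩
  have hsub2 : backwardEdges E2 π ⊆ M := by
    intro e he
    rw [hM, backwardEdges, Finset.mem_filter]
    rw [backwardEdges, Finset.mem_filter] at he
    exact ⟨Finset.mem_union_right _ he.1, he.2⟩
  constructor
  · rw [Finset.disjoint_left]
    intro v hv1 hv2
    rw [Finset.mem_sdiff, Finset.mem_inter, hmem] at hv1 hv2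
    obtain ⟨⟨⟨e1, he1, hve1⟩, hvX⟩, hnI⟩ := hv1
    obtain ⟨⟨⟨e2, he2, hve2⟩, -⟩, -⟩ := hv2
    by_cases heq : e1 = e2
    · -- endpoints of e1 in V1 and V2, so e1 ∈ MI
      have hE1' := hE1 e1 (Finset.mem_of_mem_filter _ he1)
      have hE2' := hE2 e2 (Finset.mem_of_mem_filter _ he2)
      rw [← heq] at hE2'
      have : e1 ∈ MI := by
        rw [hMI, bothInX, Finset.mem_filter]
        exact ⟨hsub1 he1, Finset.mem_inter.mpr ⟨hE1'.1, hE2'.1⟩,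
          Finset.mem_inter.mpr ⟨hE1'.2, hE2'.2⟩⟩
      exact hnI ((hmem MI v).mpr ⟨e1, this, hve1⟩)
    · obtain ⟨ha, hb, hc, hd⟩ := hfmo e1 (hsub1 he1) e2 (hsub2 he2) heq
      rcases hve1 with h1 | h1 <;> rcases hve2 with h2 | h2
      · exact ha (h1.symm.trans h2)
      · exact hb (h1.symm.trans h2)
      · exact hc (h1.symm.trans h2)
      · exact hd (h1.symm.trans h2)
  · ext v
    simp only [Finset.mem_union, Finset.mem_sdiff, Finset.mem_inter, hmem]
    constructor
    · rintro (⟨⟨⟨e, he, hve⟩, hvX⟩, hnI⟩ | ⟨⟨⟨e, he, hve⟩, hvX⟩, hnI⟩)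
      · exact ⟨⟨⟨e, hsub1 he, hve⟩, hvX⟩, hnI⟩
      · exact ⟨⟨⟨e, hsub2 he, hve⟩, hvX⟩, hnI⟩
    · rintro ⟨⟨⟨e, he, hve⟩, hvX⟩, hnI⟩
      have he' := he
      rw [hM, backwardEdges, Finset.mem_filter, Finset.mem_union] at he'
      rcases he'.1 with h | h
      · exact Or.inl ⟨⟨⟨e, by simp [backwardEdges, Finset.mem_filter, h, he'.2], hve⟩, hvX⟩, hnI⟩
      · exact Or.inr ⟨⟨⟨e, by simp [backwardEdges, Finset.mem_filter, h, he'.2], hve⟩, hvX⟩, hnI⟩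
end
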